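/- arXiv:2508.16993 — 5 statements merged into one kernel-verified Lean document; each statement's English description precedes it below -/
import Mathlib

section
/- For every odd integer n ≥ 3, C(n, (n−1)/2)·2^{−n} ≤ √(2·e^{1/6}/(π·(n−1))). -/
/-!
For `n = 2m + 1`, Pascal's rule and the symmetry `C(2m+1, m+1) = C(2m+1, m)` give
`C(2m+1, m) / 2^(2m+1) = C(2m+2, m+1) / 4^(m+1)`. The lower bound
`W k ≥ (2k+1)/(2k+2) · π/2` for the Wallis partial products `W k = 16^k / ((2k+1) C(2k, k)²)`
yields `π k (C(2k, k) / 4^k)² ≤ 1`, which at `k = m + 1` is already stronger than the claim,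
as `e^(1/6) ≥ 1`.
-/

open Real

theorem Real.Wallis.W_mul_centralBinom_sq (n : ℕ) :
    Wallis.W n * (2 * n + 1) * (n.centralBinom : ℝ) ^ 2 = 16 ^ n := by
  have hfact : ((2 * n).factorial : ℝ) = n.centralBinom * n.factorial ^ 2 := by
    rw [← Nat.choose_mul_factorial_mul_factorial (show n ≤ 2 * n by omega),
      show 2 * n - n = n by omega, Nat.centralBinom]
    push_cast; ring
  rw [Wallis.W_eq_factorial_ratio, hfact, show (16 : ℝ) ^ n = 2 ^ (4 * n) by
    rw [pow_mul]; norm_num]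
  have : (n.factorial : ℝ) ≠ 0 := by positivity
  have : (n.centralBinom : ℝ) ≠ 0 := by exact_mod_cast n.centralBinom_ne_zero
  field_simp

theorem Nat.pi_mul_self_mul_sq_centralBinom_div_four_pow_le (n : ℕ) :
    π * n * ((n.centralBinom : ℝ) / 4 ^ n) ^ 2 ≤ 1 := by
  have hW : π * n ≤ Real.Wallis.W n * (2 * n + 1) := calc
    π * n ≤ (2 * n + 1) / (2 * n + 2) * (π / 2) * (2 * n + 1) := by
      rw [div_mul_eq_mul_div, div_mul_eq_mul_div, le_div_iff₀ (by positivity)]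
      nlinarith [pi_pos]
    _ ≤ Real.Wallis.W n * (2 * n + 1) := by gcongr; exact Real.Wallis.le_W n
  rw [div_pow, ← pow_mul, mul_comm n 2, pow_mul, ← mul_div_assoc, div_le_one (by positivity),
    show (4 : ℝ) ^ 2 = 16 by norm_num, ← Real.Wallis.W_mul_centralBinom_sq]
  gcongr

theorem Nat.choose_two_mul_add_one_div_two_pow (m : ℕ) :
    ((2 * m + 1).choose m : ℝ) / 2 ^ (2 * m + 1) = (m + 1).centralBinom / 4 ^ (m + 1) := by
  have hpascal : 2 * (2 * m + 1).choose m = (m + 1).centralBinom := by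
    rw [Nat.centralBinom, show 2 * (m + 1) = 2 * m + 1 + 1 by ring, Nat.choose_succ_succ,
      Nat.choose_symm_half]
    ring
  rw [← hpascal, show (4 : ℝ) ^ (m + 1) = 2 * 2 ^ (2 * m + 1) by
      rw [show (4 : ℝ) = 2 ^ 2 by norm_num, ← pow_mul]; ring]
  push_cast
  rw [mul_div_mul_left _ _ two_ne_zero]

/-- For every odd integer `n ≥ 3`, `C(n, (n−1)/2)·2^(−n) ≤ √(2·e^(1/6)/(π·(n−1)))`. -/
theorem central_binom_bound_odd (n : ℕ) (hn : 3 ≤ n) (hodd : Odd n) :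
    (n.choose ((n - 1) / 2) : ℝ) / 2 ^ n ≤
      Real.sqrt (2 * Real.exp (1 / 6) / (Real.pi * (n - 1 : ℝ))) := by
  obtain ⟨m, rfl⟩ := hodd
  have hm : (0 : ℝ) < m := by exact_mod_cast (show 0 < m by omega)
  rw [show (2 * m + 1 - 1) / 2 = m by omega, Nat.choose_two_mul_add_one_div_two_pow]
  apply Real.le_sqrt_of_sq_le
  have hwallis := Nat.pi_mul_self_mul_sq_centralBinom_div_four_pow_le (m + 1)
  have hexp := Real.one_le_exp (show (0 : ℝ) ≤ 1 / 6 by norm_num)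
  push_cast at hwallis ⊢
  rw [add_sub_cancel_right, le_div_iff₀ (by positivity)]
  nlinarith [pi_pos]
end

section
/- For every even integer n ≥ 4 and every integer k with 0 ≤ k ≤ n/2 − 2, the following inequality of real numbers holds: Σ_{i=k+1}^{n/2−1} n/(i·(n/2 − i)!) ≤ 4·(e − 1 + 1/(⌊n/4⌋)!). -/
/-! With `n = 2m` and `j = m - i` the sum is at most `S_m = ∑_{j=1}^{m-1} 2m / ((m - j) j!)`,
and `S_m ≤ 6 < 4 (e - 1)` for every `m` (with equality `S_3 = S_4 = 6`). For `m ≥ 5` the terms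
`j = 1, 2, 3` decrease in `m`, so they are at most their values `5/2 + 5/3 + 5/6 = 5` at `m = 5`;
for `j ≥ 4`, the inequality `m ≤ 2j(m - j)` bounds the term by `4/(j-1)!`, and these add up
to at most `4 ∑_{k≥3} 1/k! ≤ 8/9`. -/

open Finset
open scoped Nat

lemma sum_Ico_one_div_factorial_le {a : ℕ} (ha : 0 < a) (b : ℕ) :
    ∑ k ∈ Ico a b, (1 / k ! : ℝ) ≤ (a + 1) / (a ! * a) := by
  have := Complex.sum_div_factorial_le (α := ℝ) a b ha
  rwa [← Nat.Ico_zero_eq_range, Ico_filter_le, max_eq_right (Nat.zero_le a), Nat.cast_succ]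
    at this

lemma cast_div_cast_sub_le_of_le {j m M : ℕ} (hjM : j < M) (hM : M ≤ m) :
    (m : ℝ) / (m - j : ℕ) ≤ M / (M - j : ℕ) := by
  have hjM' : (j : ℝ) < M := by exact_mod_cast hjM
  have hM' : (M : ℝ) ≤ m := by exact_mod_cast hM
  rw [Nat.cast_sub (by omega), Nat.cast_sub hjM.le, div_le_div_iff₀ (by linarith) (by linarith)]
  nlinarith [(j.cast_nonneg : (0 : ℝ) ≤ j)]

lemma two_mul_div_mul_factorial_le_of_le {j m M : ℕ} (hjM : j < M) (hM : M ≤ m) :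
    (2 * m : ℝ) / ((m - j : ℕ) * j !) ≤ 2 * M / ((M - j : ℕ) * j !) := by
  simp only [div_mul_eq_div_div, mul_div_assoc]
  gcongr 2 * (?_ / _)
  exact cast_div_cast_sub_le_of_le hjM hM

lemma two_mul_div_mul_factorial_le_four_div {j m : ℕ} (hj : j ≠ 0) (hjm : j < m) :
    (2 * m : ℝ) / ((m - j : ℕ) * j !) ≤ 4 / (j - 1)! := by
  have hm_le : m ≤ 2 * j * (m - j) := by
    obtain ⟨r, rfl⟩ := Nat.exists_eq_add_of_lt hjm
    rw [add_assoc, Nat.add_sub_cancel_left]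
    nlinarith [Nat.pos_of_ne_zero hj]
  have hmj : 0 < m - j := by omega
  rw [← Nat.mul_factorial_pred hj, div_le_div_iff₀ (by positivity) (by positivity)]
  have : (m : ℝ) ≤ 2 * j * (m - j : ℕ) := by exact_mod_cast hm_le
  push_cast
  nlinarith [(j - 1)!.cast_pos (α := ℝ) |>.mpr (Nat.factorial_pos _)]

lemma sum_Icc_two_mul_div_mul_factorial_eq_sum_Ico (m : ℕ) :
    ∑ i ∈ Icc 1 (m - 1), (2 * m : ℝ) / (i * (m - i)!) =
      ∑ j ∈ Ico 1 m, (2 * m : ℝ) / ((m - j : ℕ) * j !) := by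
  refine sum_nbij' (m - ·) (m - ·) ?_ ?_ ?_ ?_ fun i hi => ?_
  iterate 4 (intro i hi; simp only [mem_Icc, mem_Ico] at hi ⊢; omega)
  rw [mem_Icc] at hi
  rw [Nat.sub_sub_self (by omega)]

theorem sum_Icc_two_mul_div_mul_factorial_le_six (m : ℕ) :
    ∑ i ∈ Icc 1 (m - 1), (2 * m : ℝ) / (i * (m - i)!) ≤ 6 := by
  rcases le_or_gt m 4 with hm | hm
  · interval_cases m <;> norm_num [sum_Icc_succ_top, Nat.factorial]
  rw [sum_Icc_two_mul_div_mul_factorial_eq_sum_Ico,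
    ← sum_Ico_consecutive _ (by norm_num : 1 ≤ 4) hm.le]
  have head : ∑ j ∈ Ico 1 4, (2 * m : ℝ) / ((m - j : ℕ) * j !) ≤ 5 :=
    calc _ ≤ ∑ j ∈ Ico 1 4, (2 * 5 : ℝ) / ((5 - j : ℕ) * j !) :=
          sum_le_sum fun j hj => by
            exact_mod_cast two_mul_div_mul_factorial_le_of_le (by rw [mem_Ico] at hj; omega) hm
      _ = 5 := by norm_num [sum_Ico_succ_top, Nat.factorial]
  have tail : ∑ j ∈ Ico 4 m, (2 * m : ℝ) / ((m - j : ℕ) * j !) ≤ 8 / 9 :=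
    calc _ ≤ ∑ j ∈ Ico 4 m, (4 : ℝ) / (j - 1)! :=
          sum_le_sum fun j hj => by
            rw [mem_Ico] at hj
            exact two_mul_div_mul_factorial_le_four_div (by omega) hj.2
      _ = 4 * ∑ k ∈ Ico 3 (m - 1), (1 / k ! : ℝ) := by
          have := sum_Ico_add' (fun j => (4 : ℝ) / (j - 1)!) 3 (m - 1) 1
          rw [Nat.sub_add_cancel (by omega)] at this
          simpa [mul_sum, div_eq_mul_inv] using this.symm
      _ ≤ 4 * (4 / (3 ! * 3)) := by
          gcongr
          exact_mod_cast sum_Ico_one_div_factorial_le (by norm_num) _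
      _ = 8 / 9 := by norm_num [Nat.factorial]
  linarith

theorem sum_bound_general (n k : ℕ) (hev : Even n) :
    ∑ i ∈ Finset.Icc (k + 1) (n / 2 - 1),
        (n : ℝ) / ((i : ℝ) * ((n / 2 - i).factorial : ℝ)) ≤
      4 * (Real.exp 1 - 1 + 1 / ((n / 4).factorial : ℝ)) := by
  obtain ⟨m, rfl⟩ := hev.two_dvd
  rw [Nat.mul_div_cancel_left m two_pos, Nat.cast_mul, Nat.cast_two]
  have h_e := Real.exp_one_gt_d9
  have h_inv_factorial : 0 < 1 / ((2 * m / 4)! : ℝ) := by positivity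
  calc _ ≤ ∑ i ∈ Icc 1 (m - 1), (2 * m : ℝ) / (i * (m - i)!) :=
        sum_le_sum_of_subset_of_nonneg (Icc_subset_Icc_left (by omega))
          fun _ _ _ => by positivity
    _ ≤ 6 := sum_Icc_two_mul_div_mul_factorial_le_six m
    _ ≤ _ := by linarith

/-- For every even integer `n ≥ 4` and every integer `k` with `0 ≤ k ≤ n/2 − 2`,
`Σ_{i=k+1}^{n/2−1} n/(i·(n/2 − i)!) ≤ 4·(e − 1 + 1/(⌊n/4⌋)!)`. -/
theorem sum_bound (n k : ℕ) (hn : 4 ≤ n) (hev : Even n) (hk : k ≤ n / 2 - 2) :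
    ∑ i ∈ Finset.Icc (k + 1) (n / 2 - 1),
        (n : ℝ) / ((i : ℝ) * ((n / 2 - i).factorial : ℝ)) ≤
      4 * (Real.exp 1 - 1 + 1 / ((n / 4).factorial : ℝ)) :=
  sum_bound_general n k hev
end

section
/- For all natural numbers a, k, l, n with a ≤ k ≤ l ≤ n and n ≥ 1, one has C(l, l + a − k)·n^a ≤ C(k, a)·n^{l + a − k}. -/
/-!
Choosing `l + a - k` of `l` elements factors through first choosing the `l - k` extra ones and
then `a` of the remaining `k`, so `C(l, l + a - k) ≤ C(l, l - k) · C(k, a)`; finally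
`C(l, l - k) ≤ l ^ (l - k) ≤ n ^ (l - k)`.
-/

theorem Nat.choose_le_choose_mul_choose_sub {n r s : ℕ} (hsr : s ≤ r) :
    n.choose r ≤ n.choose s * (n - s).choose (r - s) :=
  calc n.choose r ≤ n.choose r * r.choose s := Nat.le_mul_of_pos_right _ (Nat.choose_pos hsr)
    _ = n.choose s * (n - s).choose (r - s) := Nat.choose_mul hsr

theorem choose_shift_bound_general (a k l n : ℕ) (hkl : k ≤ l) (hln : l ≤ n) :
    l.choose (l + a - k) * n ^ a ≤ k.choose a * n ^ (l + a - k) := by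
  have hfactor : l.choose (l + a - k) ≤ l.choose (l - k) * k.choose a := by
    have h := Nat.choose_le_choose_mul_choose_sub (n := l) (r := l + a - k) (s := l - k) (by omega)
    rwa [show l - (l - k) = k by omega, show l + a - k - (l - k) = a by omega] at h
  have hpow : l.choose (l - k) ≤ n ^ (l - k) :=
    (Nat.choose_le_pow l (l - k)).trans (Nat.pow_le_pow_left hln _)
  calc l.choose (l + a - k) * n ^ a ≤ l.choose (l - k) * k.choose a * n ^ a := by gcongr
    _ ≤ n ^ (l - k) * k.choose a * n ^ a := by gcongr
    _ = k.choose a * n ^ (l + a - k) := by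
      rw [show l + a - k = (l - k) + a by omega, pow_add]; ring

/-- For all natural numbers `a ≤ k ≤ l ≤ n` with `n ≥ 1`,
`C(l, l + a − k)·n^a ≤ C(k, a)·n^(l + a − k)`. -/
theorem choose_shift_bound (a k l n : ℕ) (hak : a ≤ k) (hkl : k ≤ l) (hln : l ≤ n)
    (hn : 1 ≤ n) :
    l.choose (l + a - k) * n ^ a ≤ k.choose a * n ^ (l + a - k) :=
  choose_shift_bound_general a k l n hkl hln
end

section
/- A bit string x ∈ {0,1}^n is Pareto optimal for the OneJumpZeroJump problem if and only if |x|₁ = 0, or |x|₁ = n, or k ≤ |x|₁ ≤ n − k. -/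
open Finset

/-- Number of 1-bits of a bit string `x ∈ {0,1}^n`. -/
def onesCount {n : ℕ} (x : Fin n → Bool) : ℕ :=
  (Finset.univ.filter fun i => x i = true).card

/-- Number of 0-bits of a bit string `x ∈ {0,1}^n`. -/
def zerosCount {n : ℕ} (x : Fin n → Bool) : ℕ :=
  (Finset.univ.filter fun i => x i = false).card

/-- First objective of the OneJumpZeroJump problem with parameter `k`. -/
noncomputable def ojzjF1 (n k : ℕ) (x : Fin n → Bool) : ℝ :=
  if onesCount x ≤ n - k ∨ x = fun _ => true then (k : ℝ) + onesCount x
  else (n : ℝ) - onesCount x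

/-- Second objective of the OneJumpZeroJump problem with parameter `k`. -/
noncomputable def ojzjF2 (n k : ℕ) (x : Fin n → Bool) : ℝ :=
  if zerosCount x ≤ n - k ∨ x = fun _ => false then (k : ℝ) + zerosCount x
  else (n : ℝ) - zerosCount x

/-- `u` dominates `v` (for maximization of both coordinates). -/
def dominates (u v : ℝ × ℝ) : Prop := v.1 ≤ u.1 ∧ v.2 ≤ u.2 ∧ u ≠ v

/-- `x` is Pareto optimal for OneJumpZeroJump: no `y` has a dominating objective vector. -/
noncomputable def ojzjParetoOptimal (n k : ℕ) (x : Fin n → Bool) : Prop :=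
  ∀ y : Fin n → Bool, ¬ dominates (ojzjF1 n k y, ojzjF2 n k y) (ojzjF1 n k x, ojzjF2 n k x)

lemma onesCount_le {n : ℕ} (x : Fin n → Bool) : onesCount x ≤ n := by
  simpa [onesCount] using (Finset.card_filter_le (univ : Finset (Fin n)) fun i => x i = true)

lemma zerosCount_eq {n : ℕ} (x : Fin n → Bool) : zerosCount x = n - onesCount x := by
  have h : onesCount x + zerosCount x = n := by
    unfold onesCount zerosCount
    have := Finset.card_filter_add_card_filter_not
      (s := (univ : Finset (Fin n))) (p := fun i => x i = true)
    simpa using this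
  omega

lemma onesCount_eq_zero_iff {n : ℕ} (x : Fin n → Bool) :
    onesCount x = 0 ↔ x = fun _ => false := by
  unfold onesCount
  rw [Finset.card_eq_zero, Finset.filter_eq_empty_iff]
  constructor
  · intro h; funext i; simpa using h (Finset.mem_univ i)
  · intro h i _; simp [h]

lemma onesCount_eq_n_iff {n : ℕ} (x : Fin n → Bool) :
    onesCount x = n ↔ x = fun _ => true := by
  unfold onesCount
  constructor
  · intro h
    have h2 : (Finset.univ.filter fun i => x i = true) = univ := by
      apply Finset.eq_univ_of_card
      simpa using h
    funext i
    have := Finset.mem_filter.mp (h2 ▸ Finset.mem_univ i)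
    simpa using this.2
  · intro h; subst h; simp

lemma exists_onesCount (n m : ℕ) (h : m ≤ n) :
    ∃ y : Fin n → Bool, onesCount y = m := by
  refine ⟨fun i => decide ((i : ℕ) < m), ?_⟩
  unfold onesCount
  rw [← Finset.card_range m]
  apply Finset.card_bij (fun (i : Fin n) _ => (i : ℕ))
  · intro a ha; simp at ha ⊢; omega
  · intro a _ b _ hab; exact Fin.val_injective hab
  · intro b hb
    simp at hb
    exact ⟨⟨b, lt_of_lt_of_le hb h⟩, by simp [hb], rfl⟩

lemma zerosCount_eq_n_iff {n : ℕ} (x : Fin n → Bool) :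
    zerosCount x = n ↔ x = fun _ => false := by
  rw [← onesCount_eq_zero_iff, zerosCount_eq]
  have := onesCount_le x
  omega

lemma f1_low {n k : ℕ} {y : Fin n → Bool} (h : onesCount y + k ≤ n) :
    ojzjF1 n k y = (k : ℝ) + onesCount y := by
  rw [ojzjF1, if_pos (Or.inl (by omega))]

lemma f1_top {n k : ℕ} {y : Fin n → Bool} (h : onesCount y = n) :
    ojzjF1 n k y = (k : ℝ) + n := by
  rw [ojzjF1, if_pos (Or.inr ((onesCount_eq_n_iff y).mp h)), h]

lemma f1_gap {n k : ℕ} {y : Fin n → Bool} (h1 : n - k < onesCount y)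
    (h2 : onesCount y ≠ n) : ojzjF1 n k y = (n : ℝ) - onesCount y := by
  rw [ojzjF1, if_neg]
  rintro (h | h)
  · omega
  · exact h2 ((onesCount_eq_n_iff y).mpr h)

lemma f2_low {n k : ℕ} {y : Fin n → Bool} (h : zerosCount y + k ≤ n) :
    ojzjF2 n k y = (k : ℝ) + zerosCount y := by
  rw [ojzjF2, if_pos (Or.inl (by omega))]

lemma f2_bot {n k : ℕ} {y : Fin n → Bool} (h : zerosCount y = n) :
    ojzjF2 n k y = (k : ℝ) + n := by
  rw [ojzjF2, if_pos (Or.inr ((zerosCount_eq_n_iff y).mp h)), h]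

lemma f2_gap {n k : ℕ} {y : Fin n → Bool} (h1 : n - k < zerosCount y)
    (h2 : zerosCount y ≠ n) : ojzjF2 n k y = (n : ℝ) - zerosCount y := by
  rw [ojzjF2, if_neg]
  rintro (h | h)
  · omega
  · exact h2 ((zerosCount_eq_n_iff y).mpr h)

/-- A bit string `x ∈ {0,1}^n` is Pareto optimal for OneJumpZeroJump (with `2 ≤ k < n/2`)
iff `|x|₁ = 0`, or `|x|₁ = n`, or `k ≤ |x|₁ ≤ n − k`. -/
theorem ojzj_pareto_optimal_iff (n k : ℕ) (hk : 2 ≤ k) (hkn : 2 * k < n)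
    (x : Fin n → Bool) :
    ojzjParetoOptimal n k x ↔
      onesCount x = 0 ∨ onesCount x = n ∨ (k ≤ onesCount x ∧ onesCount x ≤ n - k) := by
  have hkn' : k ≤ n := by omega
  have hmle : onesCount x ≤ n := onesCount_le x
  have hzx : zerosCount x = n - onesCount x := zerosCount_eq x
  constructor
  · -- Pareto optimal → condition (contrapositive)
    intro hpo
    by_contra hc
    push_neg at hc
    obtain ⟨h0, hn, hrange⟩ := hc
    by_cases hmk : onesCount x < k
    · -- dominated by any y with k ones
      obtain ⟨y, hy⟩ := exists_onesCount n k hkn'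
      have hzy : zerosCount y = n - k := by rw [zerosCount_eq, hy]
      have e1 : ojzjF1 n k y = (k : ℝ) + k := by rw [f1_low (by omega), hy]
      have e2 : ojzjF2 n k y = (k : ℝ) + ((n : ℝ) - k) := by
        rw [f2_low (by omega), hzy, Nat.cast_sub hkn']
      have e3 : ojzjF1 n k x = (k : ℝ) + onesCount x := f1_low (by omega)
      have e4 : ojzjF2 n k x = (onesCount x : ℝ) := by
        rw [f2_gap (by omega) (by omega), hzx, Nat.cast_sub hmle]
        ring
      refine hpo y ⟨?_, ?_, ?_⟩
      · simp only [e1, e3]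
        have : (onesCount x : ℝ) ≤ k := by exact_mod_cast hmk.le
        linarith
      · simp only [e2, e4]
        have : (onesCount x : ℝ) ≤ n := by exact_mod_cast hmle
        linarith
      · simp only [ne_eq, Prod.mk.injEq, not_and]
        intro _ h
        rw [e2, e4] at h
        have : (onesCount x : ℝ) < k := by exact_mod_cast hmk
        linarith
    · -- then n - k < onesCount x < n
      have hgap : n - k < onesCount x := by
        rcases Nat.lt_or_ge (onesCount x) k with h | h
        · omega
        · exact hrange h
      obtain ⟨y, hy⟩ := exists_onesCount n (n - k) (by omega)
      have hzy : zerosCount y = k := by rw [zerosCount_eq, hy]; omega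
      have e1 : ojzjF1 n k y = (n : ℝ) := by
        rw [f1_low (by omega), hy, Nat.cast_sub hkn']; ring
      have e2 : ojzjF2 n k y = (k : ℝ) + k := by rw [f2_low (by omega), hzy]
      have e3 : ojzjF1 n k x = (n : ℝ) - onesCount x := f1_gap hgap hn
      have e4 : ojzjF2 n k x = (k : ℝ) + ((n : ℝ) - onesCount x) := by
        rw [f2_low (by omega), hzx, Nat.cast_sub hmle]
      refine hpo y ⟨?_, ?_, ?_⟩
      · simp only [e1, e3]
        have : (0 : ℝ) ≤ onesCount x := Nat.cast_nonneg _
        linarith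
      · simp only [e2, e4]
        have : (n : ℝ) - k ≤ onesCount x := by
          have := Nat.cast_le (α := ℝ).mpr hgap.le
          rw [Nat.cast_sub hkn'] at this
          linarith
        linarith
      · simp only [ne_eq, Prod.mk.injEq, not_and]
        intro h _
        rw [e1, e3] at h
        have h1 : (1 : ℝ) ≤ onesCount x := by
          have : 1 ≤ onesCount x := by omega
          exact_mod_cast this
        linarith
  · -- condition → Pareto optimal
    rintro hcond y ⟨h1, h2, hne⟩
    dsimp only at h1 h2
    have hyle : onesCount y ≤ n := onesCount_le y
    have hzy : zerosCount y = n - onesCount y := zerosCount_eq y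
    rcases hcond with h0 | hn | ⟨hl, hr⟩
    · -- x = all zeros: f x = (k, k + n)
      have e3 : ojzjF1 n k x = (k : ℝ) := by
        rw [f1_low (by omega), h0]; simp
      have e4 : ojzjF2 n k x = (k : ℝ) + n := f2_bot (by omega)
      rw [e4] at h2
      -- f2 y ≥ k + n forces y = all zeros
      by_cases hy0 : onesCount y = 0
      · -- y = x in objective space
        apply hne
        have e1 : ojzjF1 n k y = (k : ℝ) := by rw [f1_low (by omega), hy0]; simp
        have e2 : ojzjF2 n k y = (k : ℝ) + n := f2_bot (by omega)
        rw [e1, e2, e3, e4]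
      · -- zerosCount y ≤ n - 1, so f2 y < k + n
        have hzyn : zerosCount y ≠ n := by omega
        by_cases hgap : zerosCount y + k ≤ n
        · rw [f2_low hgap] at h2
          have hc : (zerosCount y : ℝ) ≤ (n : ℝ) - k := by
            have : (zerosCount y : ℝ) + k ≤ n := by exact_mod_cast hgap
            linarith
          have hk0 : (0 : ℝ) < k := by positivity
          linarith
        · rw [f2_gap (by omega) hzyn] at h2
          have hzc : (0 : ℝ) ≤ zerosCount y := Nat.cast_nonneg _
          have hk0 : (0 : ℝ) < k := by positivity
          linarith
    · -- x = all ones: f x = (k + n, k)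
      have e3 : ojzjF1 n k x = (k : ℝ) + n := f1_top hn
      rw [e3] at h1
      by_cases hyn : onesCount y = n
      · apply hne
        have e1 : ojzjF1 n k y = (k : ℝ) + n := f1_top hyn
        have e2 : ojzjF2 n k y = (k : ℝ) := by
          rw [f2_low (by omega)]
          rw [hzy, hyn]; simp
        have e4 : ojzjF2 n k x = (k : ℝ) := by
          rw [f2_low (by omega)]
          rw [hzx, hn]; simp
        rw [e1, e2, e3, e4]
      · by_cases hgap : onesCount y + k ≤ n
        · rw [f1_low hgap] at h1
          have hc : (onesCount y : ℝ) + k ≤ n := by exact_mod_cast hgap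
          have hk0 : (0 : ℝ) < k := by positivity
          linarith
        · rw [f1_gap (by omega) hyn] at h1
          have hzc : (0 : ℝ) ≤ onesCount y := Nat.cast_nonneg _
          have hk0 : (0 : ℝ) < k := by positivity
          linarith
    · -- k ≤ onesCount x ≤ n - k : f x = (k + m, k + (n - m))
      have e3 : ojzjF1 n k x = (k : ℝ) + onesCount x := f1_low (by omega)
      have e4 : ojzjF2 n k x = (k : ℝ) + ((n : ℝ) - onesCount x) := by
        rw [f2_low (by omega), hzx, Nat.cast_sub hmle]
      rw [e3] at h1
      rw [e4] at h2
      have hmR : (k : ℝ) ≤ onesCount x := by exact_mod_cast hl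
      have hmR' : (onesCount x : ℝ) ≤ (n : ℝ) - k := by
        have := Nat.cast_le (α := ℝ).mpr hr
        rw [Nat.cast_sub hkn'] at this
        exact this
      have hk0 : (0 : ℝ) < k := by positivity
      by_cases hy0 : onesCount y = 0
      · -- f1 y = k, too small
        rw [f1_low (by omega), hy0] at h1
        simp at h1
        linarith
      by_cases hyn : onesCount y = n
      · -- f2 y = k, too small
        have e2 : ojzjF2 n k y = (k : ℝ) := by
          rw [f2_low (by omega)]
          rw [hzy, hyn]; simp
        rw [e2] at h2
        linarith
      by_cases hlow : onesCount y < k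
      · -- f2 y = onesCount y < k, too small
        have e2 : ojzjF2 n k y = (onesCount y : ℝ) := by
          rw [f2_gap (by omega) (by omega), hzy, Nat.cast_sub hyle]
          ring
        rw [e2] at h2
        have : (onesCount y : ℝ) < k := by exact_mod_cast hlow
        linarith
      by_cases hhigh : n - k < onesCount y
      · -- f1 y = n - onesCount y < k, too small
        rw [f1_gap hhigh hyn] at h1
        have : (n : ℝ) - k ≤ onesCount y := by
          have := Nat.cast_le (α := ℝ).mpr hhigh.le
          rw [Nat.cast_sub hkn'] at this
          linarith
        linarith
      · -- k ≤ onesCount y ≤ n - k : same sum, dominance forces equality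
        have e1 : ojzjF1 n k y = (k : ℝ) + onesCount y := f1_low (by omega)
        have e2 : ojzjF2 n k y = (k : ℝ) + ((n : ℝ) - onesCount y) := by
          rw [f2_low (by omega), hzy, Nat.cast_sub hyle]
        rw [e1] at h1
        rw [e2] at h2
        apply hne
        rw [e1, e2, e3, e4]
        have : (onesCount x : ℝ) = onesCount y := by linarith
        rw [this]
end

section
/- For every even integer n ≥ 4 and every integer k with 0 ≤ k ≤ n/2 − 2, the following inequality of real numbers holds: Π_{i=k+1}^{n/2−1} (1 + e·n/(i·(n/2 − i)!))^{−1} ≥ exp(−4e·(e − 1 + 1/(⌊n/4⌋)!)). -/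
/-!
Since `(1 + x)⁻¹ ≥ exp (-x)`, it suffices to bound the sum of the `x_i = e n / (i (n/2 - i)!)`
by `4e (e - 1 + 1/⌊n/4⌋!)`. Write `n = 2m`, `q = m / 2` and substitute `j = m - i`. For `j ≤ q`
we have `n / (m - j) ≤ 4`, so these terms contribute at most `4e ∑ 1/j! ≤ 4e (e - 1)`. For `j > q`
we use `(m - j) j ≥ m - 1`, so these terms are at most `e n/(m - 1) · 1/(j - 1)!`, and the
factorial tail `∑_{l ≥ q} 1/l! ≤ (q + 1)/(q · q!)` bounds them by `4e/q!`.
-/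

open Finset Real Nat

lemma sum_Ico_one_inv_factorial_le (N : ℕ) : ∑ j ∈ Ico 1 (N + 1), (j ! : ℝ)⁻¹ ≤ exp 1 - 1 := by
  have h := sum_le_exp_of_nonneg zero_le_one (N + 1)
  rw [range_eq_Ico, sum_eq_sum_Ico_succ_bot N.succ_pos] at h
  simp only [one_pow, one_div, factorial_zero, cast_one, inv_one] at h
  linarith

lemma sum_Ico_inv_factorial_le {q : ℕ} (hq : 0 < q) (N : ℕ) :
    ∑ l ∈ Ico q N, (l ! : ℝ)⁻¹ ≤ (q + 1) / (q ! * q) := by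
  have h := Complex.sum_div_factorial_le (α := ℝ) q N hq
  rw [range_eq_Ico, Ico_filter_le, max_eq_right q.zero_le, succ_eq_add_one, cast_add_one] at h
  simpa only [one_div] using h

lemma sub_one_le_sub_mul {m j : ℕ} (hj : 1 ≤ j) (hjm : j < m) : m - 1 ≤ (m - j) * j := by
  obtain ⟨d, rfl⟩ : ∃ d, m = j + d + 1 := ⟨m - j - 1, by omega⟩
  rw [show j + d + 1 - 1 = j + d by omega, show j + d + 1 - j = d + 1 by omega]
  nlinarith

lemma sub_one_mul_factorial_pred_le {m j : ℕ} (hj : 1 ≤ j) (hjm : j < m) :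
    (m - 1) * (j - 1)! ≤ (m - j) * j ! :=
  calc (m - 1) * (j - 1)! ≤ (m - j) * j * (j - 1)! := by gcongr; exact sub_one_le_sub_mul hj hjm
    _ = (m - j) * j ! := by rw [mul_assoc, mul_factorial_pred (by omega)]

lemma exp_neg_sum_le_prod_inv_one_add {ι : Type*} (s : Finset ι) (x : ι → ℝ)
    (hx : ∀ i ∈ s, -1 < x i) : exp (-∑ i ∈ s, x i) ≤ ∏ i ∈ s, (1 + x i)⁻¹ := by
  rw [← sum_neg_distrib, exp_sum]
  refine prod_le_prod (fun i _ => (exp_pos _).le) fun i hi => ?_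
  rw [exp_neg]
  exact inv_anti₀ (by linarith [hx i hi]) (by linarith [add_one_le_exp (x i)])

/-- The summand `n / (i (n/2 - i)!)` of the exponent, for `n = 2m` and `j = m - i`. -/
noncomputable def summand (m j : ℕ) : ℝ := 2 * m / ((m - j : ℕ) * j !)

lemma sum_summand_lower_le (m : ℕ) :
    ∑ j ∈ Ico 1 (m / 2 + 1), summand m j ≤ 4 * (exp 1 - 1) :=
  calc ∑ j ∈ Ico 1 (m / 2 + 1), summand m j ≤ ∑ j ∈ Ico 1 (m / 2 + 1), 4 * (j ! : ℝ)⁻¹ := by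
        refine sum_le_sum fun j hj => ?_
        obtain ⟨hj1, hjq⟩ := mem_Ico.mp hj
        have hmj : 2 * m ≤ 4 * (m - j) := by omega
        rw [summand, div_mul_eq_div_div, div_eq_mul_inv _ (j ! : ℝ)]
        gcongr
        rw [div_le_iff₀ (by norm_cast; omega)]
        exact_mod_cast hmj
    _ ≤ 4 * (exp 1 - 1) := by rw [← mul_sum]; gcongr; exact sum_Ico_one_inv_factorial_le _

lemma sum_summand_upper_le (m : ℕ) : ∑ j ∈ Ico (m / 2 + 1) m, summand m j ≤ 4 / (m / 2)! := by
  -- The tail estimate below is too weak for `m = 3`, where the sum is the single term `3`.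
  rcases lt_or_ge m 4 with hm | hm
  · interval_cases m <;> norm_num [summand]
  set q := m / 2
  have hq : 2 ≤ q := by omega
  have hm1 : ((m - 1 : ℕ) : ℝ) = m - 1 := by rw [cast_sub (by omega), cast_one]
  calc ∑ j ∈ Ico (q + 1) m, summand m j
      ≤ ∑ j ∈ Ico (q + 1) m, 2 * m / (m - 1 : ℕ) * ((j - 1)! : ℝ)⁻¹ := by
        refine sum_le_sum fun j hj => ?_
        obtain ⟨hj1, hjm⟩ := mem_Ico.mp hj
        rw [summand, ← div_eq_mul_inv, div_div]
        refine div_le_div_of_nonneg_left (by positivity)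
          (mul_pos (cast_pos.mpr (by omega)) (by positivity)) ?_
        exact_mod_cast sub_one_mul_factorial_pred_le (by omega) hjm
    _ = 2 * m / (m - 1 : ℕ) * ∑ l ∈ Ico q (m - 1), (l ! : ℝ)⁻¹ := by
        have h := sum_Ico_add' (fun j => ((j - 1)! : ℝ)⁻¹) q (m - 1) 1
        simp only [add_tsub_cancel_right, Nat.sub_add_cancel (by omega : 1 ≤ m)] at h
        rw [← mul_sum, h]
    _ ≤ 2 * m / (m - 1 : ℕ) * ((q + 1) / (q ! * q)) := by
        gcongr; exact sum_Ico_inv_factorial_le (by omega) _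
    _ ≤ 4 / q ! := by
        have hm4 : (4 : ℝ) ≤ m := by norm_cast
        have hq2 : (2 : ℝ) ≤ q := by norm_cast
        have hfac : (0 : ℝ) < q ! := by positivity
        have hkey : (m : ℝ) * (q + 1) ≤ 2 * q * (m - 1) := by
          nlinarith [mul_nonneg (sub_nonneg.2 hm4) (sub_nonneg.2 hq2)]
        rw [hm1, _root_.div_mul_div_comm,
          div_le_div_iff₀ (mul_pos (by linarith) (mul_pos hfac (by linarith))) hfac]
        nlinarith [mul_le_mul_of_nonneg_right hkey hfac.le]

lemma sum_summand_le (m : ℕ) :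
    ∑ j ∈ Ico 1 m, summand m j ≤ 4 * (exp 1 - 1 + 1 / (m / 2)!) := by
  rcases Nat.eq_zero_or_pos m with rfl | hm
  · simp [(exp_pos 1).le]
  rw [← sum_Ico_consecutive _ (by omega : 1 ≤ m / 2 + 1) (by omega : m / 2 + 1 ≤ m)]
  linarith [sum_summand_lower_le m, sum_summand_upper_le m, mul_one_div 4 ((m / 2)! : ℝ)]

theorem product_bound_general (n k : ℕ) (hev : Even n) :
    Real.exp (-(4 * Real.exp 1 * (Real.exp 1 - 1 + 1 / ((n / 4).factorial : ℝ)))) ≤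
      ∏ i ∈ Finset.Icc (k + 1) (n / 2 - 1),
        (1 + Real.exp 1 * (n : ℝ) / ((i : ℝ) * ((n / 2 - i).factorial : ℝ)))⁻¹ := by
  obtain ⟨m, rfl⟩ := hev
  rw [show (m + m) / 2 = m by omega, show (m + m) / 4 = m / 2 by omega]
  refine (exp_le_exp.mpr (neg_le_neg ?_)).trans
    (exp_neg_sum_le_prod_inv_one_add _ _ fun i _ => neg_one_lt_zero.trans_le (by positivity))
  set x : ℕ → ℝ := fun i => exp 1 * ((m + m : ℕ) : ℝ) / (i * (m - i)!)
  have hreflect := sum_Ico_reflect x 1 m.le_succ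
  rw [Nat.add_sub_cancel_left, Nat.add_sub_cancel] at hreflect
  calc ∑ i ∈ Icc (k + 1) (m - 1), x i ≤ ∑ i ∈ Ico 1 m, x i :=
        sum_le_sum_of_subset_of_nonneg (fun i hi => by simp at hi ⊢; omega)
          fun i _ _ => by positivity
    _ = exp 1 * ∑ j ∈ Ico 1 m, summand m j := by
        rw [← hreflect, mul_sum]
        refine sum_congr rfl fun j hj => ?_
        simp only [x, summand, Nat.sub_sub_self (mem_Ico.mp hj).2.le]
        push_cast
        ring
    _ ≤ 4 * exp 1 * (exp 1 - 1 + 1 / (m / 2)!) := by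
        rw [mul_assoc, mul_left_comm]
        gcongr
        exact sum_summand_le m

/-- For every even integer `n ≥ 4` and every integer `k` with `0 ≤ k ≤ n/2 − 2`,
`Π_{i=k+1}^{n/2−1} (1 + e·n/(i·(n/2 − i)!))⁻¹ ≥ exp(−4e·(e − 1 + 1/(⌊n/4⌋)!))`. -/
theorem product_bound (n k : ℕ) (hn : 4 ≤ n) (hev : Even n) (hk : k ≤ n / 2 - 2) :
    Real.exp (-(4 * Real.exp 1 * (Real.exp 1 - 1 + 1 / ((n / 4).factorial : ℝ)))) ≤
      ∏ i ∈ Finset.Icc (k + 1) (n / 2 - 1),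
        (1 + Real.exp 1 * (n : ℝ) / ((i : ℝ) * ((n / 2 - i).factorial : ℝ)))⁻¹ :=
  product_bound_general n k hev
end
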